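/- Let x, y ∈ ℝ^{2M}, q1, q2 ∈ [0,1], and suppose for each m, |c_m(n(x)_m) - c_m(n(y)_m)| ≤ L_m κ_m N ‖x-y‖₁. Define w(x) coordinatewise by w(x)_{2m-1} = q1 x_{2m-1} + (1-q1) c_m(n(x)_m) and w(x)_{2m} = q2 x_{2m} + (1-q2)|c_m(n(x)_m) - x_{2m-1}|. Then ‖w(x) - w(y)‖₁ ≤ (max{q2, 1+q1-q2} + (2-q1-q2) N ∑_{m=1}^M L_m κ_m) ‖x-y‖₁. -/
import Mathlib


/-- A point of `ℝ^{2M}` is modelled as `Fin M → ℝ × ℝ`, where `(x m).1` is coordinate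
`2m-1` (the `u`-component for resource `m`) and `(x m).2` is coordinate `2m`
(the `v`-component); the ℓ¹ norm is the sum of absolute values of all `2M` coordinates. -/
theorem stmt_4 (M : ℕ) (x y : Fin M → ℝ × ℝ) (q1 q2 : ℝ)
    (hq1 : q1 ∈ Set.Icc (0 : ℝ) 1) (hq2 : q2 ∈ Set.Icc (0 : ℝ) 1)
    (n : (Fin M → ℝ × ℝ) → Fin M → ℝ) (c : Fin M → ℝ → ℝ)
    (L κ : Fin M → ℝ) (hL : ∀ m, 0 ≤ L m) (hκ : ∀ m, 0 ≤ κ m)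
    (N : ℝ) (hN : 0 ≤ N)
    (hlip : ∀ m, |c m (n x m) - c m (n y m)| ≤
      L m * κ m * N * ∑ k, (|(x k).1 - (y k).1| + |(x k).2 - (y k).2|))
    (w : (Fin M → ℝ × ℝ) → Fin M → ℝ × ℝ)
    (hw : ∀ z m, w z m = (q1 * (z m).1 + (1 - q1) * c m (n z m),
                          q2 * (z m).2 + (1 - q2) * |c m (n z m) - (z m).1|)) :
    ∑ m, (|(w x m).1 - (w y m).1| + |(w x m).2 - (w y m).2|) ≤
      (max q2 (1 + q1 - q2) + (2 - q1 - q2) * N * ∑ m, L m * κ m) *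
        ∑ k, (|(x k).1 - (y k).1| + |(x k).2 - (y k).2|) := by
  obtain ⟨hq1a, hq1b⟩ := hq1
  obtain ⟨hq2a, hq2b⟩ := hq2
  set D : ℝ := ∑ k, (|(x k).1 - (y k).1| + |(x k).2 - (y k).2|) with hDdef
  have hD : 0 ≤ D := Finset.sum_nonneg fun k _ =>
    add_nonneg (abs_nonneg _) (abs_nonneg _)
  set A : ℝ := max q2 (1 + q1 - q2) with hAdef
  have key : ∀ m, |(w x m).1 - (w y m).1| + |(w x m).2 - (w y m).2| ≤
      A * (|(x m).1 - (y m).1| + |(x m).2 - (y m).2|) + (2 - q1 - q2) * (L m * κ m) * N * D := by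
    intro m
    rw [hw x m, hw y m]
    simp only
    have hc := hlip m
    have h1 : |(q1 * (x m).1 + (1 - q1) * c m (n x m)) -
        (q1 * (y m).1 + (1 - q1) * c m (n y m))| ≤
        q1 * |(x m).1 - (y m).1| + (1 - q1) * (L m * κ m * N * D) := by
      have : (q1 * (x m).1 + (1 - q1) * c m (n x m)) -
          (q1 * (y m).1 + (1 - q1) * c m (n y m)) =
          q1 * ((x m).1 - (y m).1) + (1 - q1) * (c m (n x m) - c m (n y m)) := by ring
      rw [this]
      calc _ ≤ |q1 * ((x m).1 - (y m).1)| + |(1 - q1) * (c m (n x m) - c m (n y m))| :=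
            abs_add_le _ _
        _ = q1 * |(x m).1 - (y m).1| + (1 - q1) * |c m (n x m) - c m (n y m)| := by
            rw [abs_mul, abs_mul, abs_of_nonneg hq1a, abs_of_nonneg (show (0:ℝ) ≤ 1 - q1 by linarith)]
        _ ≤ _ := by
            gcongr
    have habs : |(|c m (n x m) - (x m).1| - |c m (n y m) - (y m).1| : ℝ)| ≤
        |c m (n x m) - c m (n y m)| + |(x m).1 - (y m).1| := by
      calc |(|c m (n x m) - (x m).1| - |c m (n y m) - (y m).1| : ℝ)|
          ≤ |(c m (n x m) - (x m).1) - (c m (n y m) - (y m).1)| := abs_abs_sub_abs_le_abs_sub _ _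
        _ = |(c m (n x m) - c m (n y m)) + ((y m).1 - (x m).1)| := by ring_nf
        _ ≤ |c m (n x m) - c m (n y m)| + |(y m).1 - (x m).1| := abs_add_le _ _
        _ = _ := by rw [abs_sub_comm ((y m).1)]
    have h2 : |(q2 * (x m).2 + (1 - q2) * |c m (n x m) - (x m).1|) -
        (q2 * (y m).2 + (1 - q2) * |c m (n y m) - (y m).1|)| ≤
        q2 * |(x m).2 - (y m).2| +
          (1 - q2) * (L m * κ m * N * D + |(x m).1 - (y m).1|) := by
      have : (q2 * (x m).2 + (1 - q2) * |c m (n x m) - (x m).1|) -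
          (q2 * (y m).2 + (1 - q2) * |c m (n y m) - (y m).1|) =
          q2 * ((x m).2 - (y m).2) +
            (1 - q2) * (|c m (n x m) - (x m).1| - |c m (n y m) - (y m).1|) := by ring
      rw [this]
      calc _ ≤ |q2 * ((x m).2 - (y m).2)| +
            |(1 - q2) * (|c m (n x m) - (x m).1| - |c m (n y m) - (y m).1|)| := abs_add_le _ _
        _ = q2 * |(x m).2 - (y m).2| +
            (1 - q2) * |(|c m (n x m) - (x m).1| - |c m (n y m) - (y m).1| : ℝ)| := by
            rw [abs_mul, abs_mul, abs_of_nonneg hq2a, abs_of_nonneg (show (0:ℝ) ≤ 1 - q2 by linarith)]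
        _ ≤ _ := by
            gcongr
            · linarith
    have hA1 : q2 ≤ A := le_max_left _ _
    have hA2 : 1 + q1 - q2 ≤ A := le_max_right _ _
    have h1a : 0 ≤ |(x m).1 - (y m).1| := abs_nonneg _
    have h2a : 0 ≤ |(x m).2 - (y m).2| := abs_nonneg _
    nlinarith [h1, h2]
  calc ∑ m, (|(w x m).1 - (w y m).1| + |(w x m).2 - (w y m).2|)
      ≤ ∑ m, (A * (|(x m).1 - (y m).1| + |(x m).2 - (y m).2|) +
          (2 - q1 - q2) * (L m * κ m) * N * D) :=
        Finset.sum_le_sum fun m _ => key m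
    _ = A * D + (2 - q1 - q2) * N * (∑ m, L m * κ m) * D := by
        rw [Finset.sum_add_distrib, ← Finset.mul_sum, ← hDdef]
        congr 1
        rw [show (2 - q1 - q2) * N * (∑ m, L m * κ m) * D
            = ∑ m, ((2 - q1 - q2) * N * D) * (L m * κ m) by
          rw [← Finset.mul_sum]; ring]
        exact Finset.sum_congr rfl fun m _ => by ring
    _ = (A + (2 - q1 - q2) * N * ∑ m, L m * κ m) * D := by ring
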